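/- arXiv:1601.06231 — 6 statements merged into one kernel-verified Lean document; each statement's English description precedes it below -/
import Mathlib

section
/- Let A and B be positive semidefinite operators on a finite-dimensional complex Hilbert space. Then the operator Y° = B + (A − B)_+ is an optimal solution of the problem of minimizing Tr Y over all operators Y satisfying Y ≥ A and Y ≥ B; that is, Y° ≥ A, Y° ≥ B, and for every Y with Y ≥ A and Y ≥ B one has Tr Y ≥ Tr Y°. -/
/-
Diagonalise `A - B = U D U*` with `D = diag λ`. Then `Y° - B = (A - B)₊` and
`Y° - A = (A - B)₊ - (A - B) = U diag (max λ 0 - λ) U*` are positive semidefinite.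
For optimality, if `Y ≥ A` and `Y ≥ B` then `M = U* (Y - B) U` satisfies `M ≥ 0` and `M ≥ D`,
so every diagonal entry has `M i i ≥ max (λ i) 0`; summing gives
`Tr (Y - B) = Tr M ≥ ∑ max (λ i) 0 = Tr (A - B)₊`.
-/

open Matrix
open scoped ComplexOrder

/-- Positive part `A₊` of a Hermitian matrix (junk value `0` on non-Hermitian input). -/
noncomputable def matPosPart {n : ℕ} (A : Matrix (Fin n) (Fin n) ℂ) : Matrix (Fin n) (Fin n) ℂ :=
  if hA : A.IsHermitian then
    (hA.eigenvectorUnitary : Matrix (Fin n) (Fin n) ℂ) *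
      Matrix.diagonal (fun i => if 0 < hA.eigenvalues i then (hA.eigenvalues i : ℂ) else 0) *
      star (hA.eigenvectorUnitary : Matrix (Fin n) (Fin n) ℂ)
  else 0

/-- Projection `P₍>₎(A)` onto the span of eigenvectors of positive eigenvalues. -/
noncomputable def matProjPos {n : ℕ} (A : Matrix (Fin n) (Fin n) ℂ) : Matrix (Fin n) (Fin n) ℂ :=
  if hA : A.IsHermitian then
    (hA.eigenvectorUnitary : Matrix (Fin n) (Fin n) ℂ) *
      Matrix.diagonal (fun i => if 0 < hA.eigenvalues i then (1 : ℂ) else 0) *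
      star (hA.eigenvectorUnitary : Matrix (Fin n) (Fin n) ℂ)
  else 0

/-- Projection `P₍≥₎(A)` onto the span of eigenvectors of nonnegative eigenvalues. -/
noncomputable def matProjNonneg {n : ℕ} (A : Matrix (Fin n) (Fin n) ℂ) : Matrix (Fin n) (Fin n) ℂ :=
  if hA : A.IsHermitian then
    (hA.eigenvectorUnitary : Matrix (Fin n) (Fin n) ℂ) *
      Matrix.diagonal (fun i => if 0 ≤ hA.eigenvalues i then (1 : ℂ) else 0) *
      star (hA.eigenvectorUnitary : Matrix (Fin n) (Fin n) ℂ)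
  else 0

namespace Matrix

variable {ι : Type*} [Fintype ι] [DecidableEq ι]

lemma posSemidef_mul_diagonal_ofReal_mul_conjTranspose {m : Type*} [Finite m]
    {d : ι → ℝ} (hd : 0 ≤ d) (V : Matrix m ι ℂ) :
    (V * diagonal (fun i => (d i : ℂ)) * Vᴴ).PosSemidef :=
  (posSemidef_diagonal_iff.mpr fun i => Complex.zero_le_real.mpr (hd i)).mul_mul_conjTranspose_same
    V

lemma sum_max_zero_le_trace_re {M : Matrix ι ι ℂ} {d : ι → ℝ} (hM : M.PosSemidef)
    (hMd : (M - diagonal (fun i => (d i : ℂ))).PosSemidef) :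
    ∑ i, max (d i) 0 ≤ M.trace.re := by
  rw [trace, Complex.re_sum]
  refine Finset.sum_le_sum fun i _ => max_le ?_ (Complex.nonneg_iff.mp hM.diag_nonneg).1
  simpa [sub_nonneg] using (Complex.nonneg_iff.mp (hMd.diag_nonneg (i := i))).1

lemma sum_max_zero_le_trace_re_of_unitary_conj {U : Matrix ι ι ℂ} (hU : U ∈ unitary _)
    {Y : Matrix ι ι ℂ} {d : ι → ℝ} (hY : Y.PosSemidef)
    (hYd : (Y - U * diagonal (fun i => (d i : ℂ)) * star U).PosSemidef) :
    ∑ i, max (d i) 0 ≤ Y.trace.re := by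
  have hconj : star U * (U * diagonal (fun i => (d i : ℂ)) * star U) * U =
      diagonal (fun i => (d i : ℂ)) := by
    simp only [← mul_assoc, Unitary.star_mul_self_of_mem hU, one_mul]
    simp only [mul_assoc, Unitary.star_mul_self_of_mem hU, mul_one]
  have hMd : (star U * Y * U - diagonal (fun i => (d i : ℂ))).PosSemidef := by
    rw [← hconj, ← sub_mul, ← mul_sub]
    exact hYd.conjTranspose_mul_mul_same U
  have htrace : (star U * Y * U).trace = Y.trace := by
    rw [trace_mul_cycle, Unitary.mul_star_self_of_mem hU, one_mul]
  rw [← htrace]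
  exact sum_max_zero_le_trace_re (hY.conjTranspose_mul_mul_same U) hMd

end Matrix

namespace Matrix.IsHermitian

variable {n : ℕ} {C : Matrix (Fin n) (Fin n) ℂ}

lemma eq_conj_diagonal_eigenvalues (hC : C.IsHermitian) :
    C = (hC.eigenvectorUnitary : Matrix (Fin n) (Fin n) ℂ) *
      diagonal (fun i => (hC.eigenvalues i : ℂ)) * star (hC.eigenvectorUnitary : Matrix _ _ ℂ) :=
  hC.spectral_theorem

lemma matPosPart_eq_conj_diagonal (hC : C.IsHermitian) :
    matPosPart C = (hC.eigenvectorUnitary : Matrix (Fin n) (Fin n) ℂ) *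
      diagonal (fun i => ((max (hC.eigenvalues i) 0 : ℝ) : ℂ)) *
        star (hC.eigenvectorUnitary : Matrix _ _ ℂ) := by
  rw [matPosPart, dif_pos hC]
  congr 3 with i
  split_ifs with h
  · rw [max_eq_left h.le]
  · rw [max_eq_right (not_lt.mp h), Complex.ofReal_zero]

lemma posSemidef_matPosPart (hC : C.IsHermitian) : (matPosPart C).PosSemidef := by
  rw [hC.matPosPart_eq_conj_diagonal]
  exact posSemidef_mul_diagonal_ofReal_mul_conjTranspose (fun i => le_max_right _ _) _

lemma posSemidef_matPosPart_sub (hC : C.IsHermitian) : (matPosPart C - C).PosSemidef := by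
  have hsub : matPosPart C - C = (hC.eigenvectorUnitary : Matrix (Fin n) (Fin n) ℂ) *
      diagonal (fun i => ((max (hC.eigenvalues i) 0 - hC.eigenvalues i : ℝ) : ℂ)) *
        star (hC.eigenvectorUnitary : Matrix _ _ ℂ) := by
    conv_lhs =>
      rw [hC.matPosPart_eq_conj_diagonal]
      arg 2
      rw [hC.eq_conj_diagonal_eigenvalues]
    rw [← sub_mul, ← mul_sub, diagonal_sub]
    push_cast
    rfl
  rw [hsub]
  exact posSemidef_mul_diagonal_ofReal_mul_conjTranspose
    (fun i => sub_nonneg.mpr (le_max_left _ _)) _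

lemma trace_matPosPart (hC : C.IsHermitian) :
    (matPosPart C).trace = ∑ i, ((max (hC.eigenvalues i) 0 : ℝ) : ℂ) := by
  rw [hC.matPosPart_eq_conj_diagonal, trace_mul_cycle, Unitary.coe_star_mul_self, one_mul,
    trace_diagonal]

lemma trace_re_matPosPart_le (hC : C.IsHermitian) {Y : Matrix (Fin n) (Fin n) ℂ}
    (hY : Y.PosSemidef) (hYC : (Y - C).PosSemidef) : (matPosPart C).trace.re ≤ Y.trace.re := by
  rw [hC.trace_matPosPart, Complex.re_sum]
  rw [hC.eq_conj_diagonal_eigenvalues] at hYC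
  exact sum_max_zero_le_trace_re_of_unitary_conj hC.eigenvectorUnitary.2 hY hYC

end Matrix.IsHermitian

/-- For positive semidefinite `A`, `B`, the operator `Y° = B + (A − B)₊`
is an optimal solution of minimizing `Tr Y` subject to `Y ≥ A`, `Y ≥ B`. -/
theorem stmt_0 {n : ℕ} (A B : Matrix (Fin n) (Fin n) ℂ)
    (hA : A.PosSemidef) (hB : B.PosSemidef) :
    (B + matPosPart (A - B) - A).PosSemidef ∧
    (B + matPosPart (A - B) - B).PosSemidef ∧
    ∀ Y : Matrix (Fin n) (Fin n) ℂ, (Y - A).PosSemidef → (Y - B).PosSemidef →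
      (B + matPosPart (A - B)).trace.re ≤ Y.trace.re := by
  have hC : (A - B).IsHermitian := hA.isHermitian.sub hB.isHermitian
  refine ⟨?_, ?_, fun Y hYA hYB => ?_⟩
  · rw [show B + matPosPart (A - B) - A = matPosPart (A - B) - (A - B) by abel]
    exact hC.posSemidef_matPosPart_sub
  · simpa only [add_sub_cancel_left] using hC.posSemidef_matPosPart
  · have hYBC : (Y - B - (A - B)).PosSemidef := by rwa [sub_sub_sub_cancel_right]
    calc (B + matPosPart (A - B)).trace.re
        = B.trace.re + (matPosPart (A - B)).trace.re := by rw [trace_add, Complex.add_re]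
      _ ≤ B.trace.re + (Y - B).trace.re := by grw [hC.trace_re_matPosPart_le hYB hYBC]
      _ = Y.trace.re := by rw [trace_sub, Complex.sub_re, add_sub_cancel]
end

section
/- Let A and B be positive semidefinite operators on a finite-dimensional complex Hilbert space and let Y° = B + (A − B)_+. Then every operator Φ with 0 ≤ Φ ≤ 1 satisfies Tr Y° ≥ Tr(AΦ) + Tr(B(1 − Φ)), and equality holds if and only if P_≥(A − B) ≥ Φ ≥ P_>(A − B). -/
open Matrix
open scoped ComplexOrder

/-!
Diagonalise `A - B = U diag(μ) U*` and put `Ψ = U* Φ U`, so that `0 ≤ Ψ ≤ 1`. Then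
`Tr(AΦ) + Tr(B(1 - Φ)) = Tr B + ∑ μᵢ Ψᵢᵢ` and `Tr Y° = Tr B + ∑ max μᵢ 0`, and since
`0 ≤ Ψᵢᵢ ≤ 1` the inequality holds term by term, with equality iff `Ψᵢᵢ = 1` where `μᵢ > 0` and
`Ψᵢᵢ = 0` where `μᵢ < 0`. For `0 ≤ Ψ ≤ 1` a vanishing diagonal entry of `Ψ` (or of `1 - Ψ`) forces
its whole row to vanish, which turns these diagonal conditions into the operator inequalities
`diag(1_{μ ≥ 0}) ≥ Ψ ≥ diag(1_{μ > 0})`.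
-/

namespace Matrix

variable {𝕜 ι : Type*} [RCLike 𝕜] [DecidableEq ι]

lemma re_diag_mem_Icc {Ψ : Matrix ι ι 𝕜} (hΨ : Ψ.PosSemidef) (hΨ1 : (1 - Ψ).PosSemidef)
    (i : ι) : RCLike.re (Ψ i i) ∈ Set.Icc 0 1 := by
  have h1 := (RCLike.nonneg_iff.mp (hΨ1.diag_nonneg (i := i))).1
  simp only [sub_apply, one_apply_eq, map_sub, RCLike.one_re, sub_nonneg] at h1
  exact ⟨(RCLike.nonneg_iff.mp hΨ.diag_nonneg).1, h1⟩

variable [Fintype ι]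

lemma PosSemidef.apply_eq_zero_of_diag_eq_zero {M : Matrix ι ι 𝕜} (hM : M.PosSemidef)
    {i : ι} (hi : M i i = 0) (j : ι) : M i j = 0 := by
  have hcol : M *ᵥ Pi.single i 1 = 0 :=
    (hM.dotProduct_mulVec_zero_iff _).mp (by simpa [mulVec_single_one] using hi)
  have hji : M j i = 0 := by simpa [mulVec_single_one] using congrFun hcol j
  rw [← hM.1.apply, hji, star_zero]

lemma posSemidef_diagonal_sub_iff {Ψ : Matrix ι ι 𝕜} (hΨ : Ψ.PosSemidef)
    (hΨ1 : (1 - Ψ).PosSemidef) (p : ι → Prop) [DecidablePred p] :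
    (diagonal (fun i => if p i then (1 : 𝕜) else 0) - Ψ).PosSemidef ↔
      ∀ i, ¬ p i → Ψ i i = 0 := by
  refine ⟨fun h i hi => le_antisymm ?_ (hΨ.diag_nonneg), fun h => ?_⟩
  · simpa [hi] using h.diag_nonneg (i := i)
  have hrow : ∀ i j, ¬ p i → Ψ i j = 0 := fun i j hi =>
    hΨ.apply_eq_zero_of_diag_eq_zero (h i hi) j
  have hcol : ∀ i j, ¬ p j → Ψ i j = 0 := fun i j hj => by
    rw [← hΨ.1.apply, hrow j i hj, star_zero]
  set P := diagonal (fun i => if p i then (1 : 𝕜) else 0)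
  -- `Ψ` lives on the range of the diagonal projection `P`, where `P - Ψ` coincides with `1 - Ψ`.
  have hP : P - Ψ = Pᴴ * (1 - Ψ) * P := by
    ext i j
    rcases eq_or_ne i j with rfl | hij
    · by_cases hi : p i <;> simp [P, diagonal_conjTranspose, hi, h i]
    · by_cases hi : p i <;> by_cases hj : p j <;>
        simp [P, diagonal_conjTranspose, hij, hi, hj, hrow i j, hcol i j]
  rw [hP]
  exact hΨ1.conjTranspose_mul_mul_same P

lemma posSemidef_sub_diagonal_iff {Ψ : Matrix ι ι 𝕜} (hΨ : Ψ.PosSemidef)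
    (hΨ1 : (1 - Ψ).PosSemidef) (q : ι → Prop) [DecidablePred q] :
    (Ψ - diagonal (fun i => if q i then (1 : 𝕜) else 0)).PosSemidef ↔
      ∀ i, q i → Ψ i i = 1 := by
  have hcompl : diagonal (fun i => if ¬ q i then (1 : 𝕜) else 0) - (1 - Ψ) =
      Ψ - diagonal (fun i => if q i then (1 : 𝕜) else 0) := by
    ext i j
    by_cases hi : q i <;> simp [diagonal_apply, one_apply, hi]
  rw [← hcompl, posSemidef_diagonal_sub_iff hΨ1 (by simpa using hΨ)]
  simp only [not_not, sub_apply, one_apply_eq, sub_eq_zero, eq_comm (a := (1 : 𝕜))]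

lemma posSemidef_sub_iff_unitary_conj (U : unitary (Matrix ι ι 𝕜)) (X Y : Matrix ι ι 𝕜) :
    (X - Y).PosSemidef ↔
      (star (U : Matrix ι ι 𝕜) * X * U - star (U : Matrix ι ι 𝕜) * Y * U).PosSemidef := by
  rw [← sub_mul, ← mul_sub, Unitary.isUnit_coe.posSemidef_star_left_conjugate_iff]

lemma unitary_star_conj_cancel (U : unitary (Matrix ι ι 𝕜)) (D : Matrix ι ι 𝕜) :
    star (U : Matrix ι ι 𝕜) * (U * D * star (U : Matrix ι ι 𝕜)) * U = D := by
  simp only [← mul_assoc, Unitary.coe_star_mul_self, one_mul]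
  simp [mul_assoc]

end Matrix

lemma mul_le_max_zero {a x : ℝ} (hx0 : 0 ≤ x) (hx1 : x ≤ 1) : a * x ≤ max a 0 := by
  rcases le_total a 0 with ha | ha
  · nlinarith [le_max_right a 0]
  · nlinarith [le_max_left a 0]

lemma mul_eq_max_zero_iff {a x : ℝ} :
    a * x = max a 0 ↔ (a < 0 → x = 0) ∧ (0 < a → x = 1) := by
  rcases lt_trichotomy a 0 with ha | rfl | ha
  · simp [ha, ha.ne, ha.le, ha.not_gt]
  · simp
  · simp [ha, ha.ne', ha.le, ha.not_gt]

namespace Matrix.IsHermitian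

variable {n : ℕ} {C : Matrix (Fin n) (Fin n) ℂ} (hC : C.IsHermitian)

lemma trace_mul_eq_sum_eigenvalues_mul (Φ : Matrix (Fin n) (Fin n) ℂ) :
    (C * Φ).trace = ∑ i, (hC.eigenvalues i : ℂ) *
      (star (hC.eigenvectorUnitary : Matrix (Fin n) (Fin n) ℂ) * Φ *
        hC.eigenvectorUnitary) i i := by
  conv_lhs => rw [hC.spectral_theorem, Unitary.conjStarAlgAut_apply]
  rw [mul_assoc _ (star _) Φ, trace_mul_cycle]
  simp [trace, mul_diagonal, mul_comm]

lemma re_trace_matPosPart : (matPosPart C).trace.re = ∑ i, max (hC.eigenvalues i) 0 := by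
  rw [matPosPart, dif_pos hC, trace_mul_cycle, Unitary.coe_star_mul_self, one_mul,
    trace_diagonal, Complex.re_sum]
  refine Finset.sum_congr rfl fun i _ => ?_
  split_ifs with h
  · simp [h.le]
  · simp [not_lt.mp h]

lemma posSemidef_matProjNonneg_sub_iff (Φ : Matrix (Fin n) (Fin n) ℂ) :
    (matProjNonneg C - Φ).PosSemidef ↔
      (diagonal (fun i => if 0 ≤ hC.eigenvalues i then (1 : ℂ) else 0) -
        star (hC.eigenvectorUnitary : Matrix (Fin n) (Fin n) ℂ) * Φ *
          hC.eigenvectorUnitary).PosSemidef := by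
  rw [posSemidef_sub_iff_unitary_conj hC.eigenvectorUnitary, matProjNonneg, dif_pos hC,
    unitary_star_conj_cancel]

lemma posSemidef_sub_matProjPos_iff (Φ : Matrix (Fin n) (Fin n) ℂ) :
    (Φ - matProjPos C).PosSemidef ↔
      (star (hC.eigenvectorUnitary : Matrix (Fin n) (Fin n) ℂ) * Φ * hC.eigenvectorUnitary -
        diagonal (fun i => if 0 < hC.eigenvalues i then (1 : ℂ) else 0)).PosSemidef := by
  rw [posSemidef_sub_iff_unitary_conj hC.eigenvectorUnitary, matProjPos, dif_pos hC,
    unitary_star_conj_cancel]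

end Matrix.IsHermitian

/-- For PSD `A`, `B` and `Y° = B + (A − B)₊`, every `Φ` with `0 ≤ Φ ≤ 1`
satisfies `Tr Y° ≥ Tr(AΦ) + Tr(B(1 − Φ))`, with equality iff
`P₍≥₎(A − B) ≥ Φ ≥ P₍>₎(A − B)`. -/
theorem stmt_1 {n : ℕ} (A B Φ : Matrix (Fin n) (Fin n) ℂ)
    (hA : A.PosSemidef) (hB : B.PosSemidef)
    (hΦ : Φ.PosSemidef) (hΦ1 : ((1 : Matrix (Fin n) (Fin n) ℂ) - Φ).PosSemidef) :
    (A * Φ).trace.re + (B * (1 - Φ)).trace.re ≤ (B + matPosPart (A - B)).trace.re ∧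
    ((A * Φ).trace.re + (B * (1 - Φ)).trace.re = (B + matPosPart (A - B)).trace.re ↔
      (matProjNonneg (A - B) - Φ).PosSemidef ∧ (Φ - matProjPos (A - B)).PosSemidef) := by
  have hC : (A - B).IsHermitian := hA.1.sub hB.1
  set U : Matrix (Fin n) (Fin n) ℂ := (hC.eigenvectorUnitary : Matrix (Fin n) (Fin n) ℂ)
  set Ψ := star U * Φ * U
  have hΨ : Ψ.PosSemidef := hΦ.conjTranspose_mul_mul_same U
  have hΨ1 : (1 - Ψ).PosSemidef := by
    simpa [Ψ, U, mul_sub, sub_mul, ← star_eq_conjTranspose] using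
      hΦ1.conjTranspose_mul_mul_same U
  set x : Fin n → ℝ := fun i => (Ψ i i).re
  have hxΨ : ∀ i, Ψ i i = x i := fun i => (hΨ.1.coe_re_apply_self i).symm
  have hlhs : (A * Φ).trace.re + (B * (1 - Φ)).trace.re =
      B.trace.re + ∑ i, hC.eigenvalues i * x i := by
    have : A * Φ + B * (1 - Φ) = B + (A - B) * Φ := by noncomm_ring
    rw [← Complex.add_re, ← trace_add, this, trace_add, Complex.add_re,
      hC.trace_mul_eq_sum_eigenvalues_mul, Complex.re_sum]
    simp only [Complex.re_ofReal_mul]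
    rfl
  have hrhs : (B + matPosPart (A - B)).trace.re =
      B.trace.re + ∑ i, max (hC.eigenvalues i) 0 := by
    rw [trace_add, Complex.add_re, hC.re_trace_matPosPart]
  have hle : ∀ i ∈ Finset.univ, hC.eigenvalues i * x i ≤ max (hC.eigenvalues i) 0 :=
    fun i _ => mul_le_max_zero (re_diag_mem_Icc hΨ hΨ1 i).1 (re_diag_mem_Icc hΨ hΨ1 i).2
  rw [hlhs, hrhs, add_le_add_iff_left, add_right_inj, Finset.sum_eq_sum_iff_of_le hle,
    hC.posSemidef_matProjNonneg_sub_iff, hC.posSemidef_sub_matProjPos_iff,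
    posSemidef_diagonal_sub_iff hΨ hΨ1, posSemidef_sub_diagonal_iff hΨ hΨ1]
  refine ⟨Finset.sum_le_sum hle, ?_⟩
  simp only [Finset.mem_univ, true_implies, mul_eq_max_zero_iff, forall_and, hxΨ, not_le,
    Complex.ofReal_eq_zero, Complex.ofReal_eq_one]
end

section
/- For every quantum state set ρ_0,…,ρ_{M-1} and every M-outcome POVM Π_0,…,Π_{M-1}, the success probability satisfies P_C(Π) = Σ_m Tr(ρ_m Π_m) ≤ P_C^up = Tr X_{M-1}. Consequently the optimal success probability P_C^opt = max_Π P_C(Π) satisfies P_C^up ≥ P_C^opt. -/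
/-!
Each `X_k` dominates `ρ_0, …, ρ_k` in the Loewner order: `X_{k+1} - X_k = (ρ_{k+1} - X_k)₊ ≥ 0`,
and `X_{k+1} = X_k + (ρ_{k+1} - X_k)₊ ≥ X_k + (ρ_{k+1} - X_k) = ρ_{k+1}`. Hence for any POVM,
`Σ Tr(ρ_m Π_m) ≤ Σ Tr(X_{M-1} Π_m) = Tr X_{M-1}`, since `Tr(A Π) ≥ 0` for `A, Π ≥ 0`.
-/

open Matrix
open scoped ComplexOrder

/-- The recursion `X₀ = ρ₀`, `X_{m+1} = X_m + (ρ_{m+1} − X_m)₊`. -/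
noncomputable def Xseq {n : ℕ} (ρ : ℕ → Matrix (Fin n) (Fin n) ℂ) : ℕ → Matrix (Fin n) (Fin n) ℂ
  | 0 => ρ 0
  | m + 1 => Xseq ρ m + matPosPart (ρ (m + 1) - Xseq ρ m)

open scoped MatrixOrder

namespace Matrix

variable {ι 𝕜 : Type*} [Fintype ι] [RCLike 𝕜]

theorem PosSemidef.trace_mul_nonneg {A B : Matrix ι ι 𝕜} (hA : A.PosSemidef)
    (hB : B.PosSemidef) : 0 ≤ (A * B).trace := by
  classical
  obtain ⟨C, rfl⟩ := CStarAlgebra.nonneg_iff_eq_star_mul_self.mp hA.nonneg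
  rw [mul_assoc, trace_mul_comm, mul_assoc, ← mul_assoc, star_eq_conjTranspose]
  exact (hB.mul_mul_conjTranspose_same C).trace_nonneg

theorem trace_mul_le_trace_mul_of_le {A B P : Matrix ι ι 𝕜} (hAB : A ≤ B)
    (hP : P.PosSemidef) : (A * P).trace ≤ (B * P).trace := by
  have := (le_iff.mp hAB).trace_mul_nonneg hP
  rwa [sub_mul, trace_sub, sub_nonneg] at this

theorem sum_trace_mul_le_trace [DecidableEq ι] {κ : Type*} {s : Finset κ} {ρ P : κ → Matrix ι ι 𝕜}
    {X : Matrix ι ι 𝕜} (hP : ∀ m ∈ s, (P m).PosSemidef) (hPsum : ∑ m ∈ s, P m = 1)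
    (hρX : ∀ m ∈ s, ρ m ≤ X) : ∑ m ∈ s, (ρ m * P m).trace ≤ X.trace :=
  calc ∑ m ∈ s, (ρ m * P m).trace
      ≤ ∑ m ∈ s, (X * P m).trace :=
        Finset.sum_le_sum fun m hm => trace_mul_le_trace_mul_of_le (hρX m hm) (hP m hm)
    _ = X.trace := by rw [← trace_sum, ← Finset.mul_sum, hPsum, mul_one]

end Matrix

theorem conj_diagonal_posSemidef {ι 𝕜 : Type*} [Fintype ι] [DecidableEq ι] [RCLike 𝕜]
    (U : Matrix ι ι 𝕜) {d : ι → 𝕜} (hd : ∀ i, 0 ≤ d i) :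
    (U * diagonal d * star U).PosSemidef :=
  (posSemidef_diagonal_iff.mpr hd).mul_mul_conjTranspose_same U

section PosPart

variable {n : ℕ}

theorem matPosPart_nonneg (A : Matrix (Fin n) (Fin n) ℂ) : 0 ≤ matPosPart A := by
  rw [matPosPart]
  split_ifs with hA
  · refine (conj_diagonal_posSemidef _ fun i => ?_).nonneg
    split_ifs with hi
    · exact Complex.zero_le_real.mpr hi.le
    · exact le_rfl
  · exact le_rfl

theorem le_matPosPart {A : Matrix (Fin n) (Fin n) ℂ} (hA : A.IsHermitian) : A ≤ matPosPart A := by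
  rw [le_iff, matPosPart, dif_pos hA]
  conv => enter [1, 2]; rw [hA.spectral_theorem, Unitary.conjStarAlgAut_apply]
  rw [← sub_mul, ← mul_sub, diagonal_sub]
  refine conj_diagonal_posSemidef _ fun i => ?_
  simp only [Function.comp_apply]
  split_ifs with hi
  · simp
  · simpa using Complex.real_le_real.mpr (not_lt.mp hi)

end PosPart

section Xseq

variable {n : ℕ} {ρ : ℕ → Matrix (Fin n) (Fin n) ℂ}

theorem monotone_Xseq : Monotone (Xseq ρ) :=
  monotone_nat_of_le_succ fun _ => le_add_of_nonneg_right (matPosPart_nonneg _)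

theorem isHermitian_Xseq (h₀ : (ρ 0).IsHermitian) : ∀ k, (Xseq ρ k).IsHermitian
  | 0 => h₀
  | k + 1 => (isHermitian_Xseq h₀ k).add (matPosPart_nonneg _).posSemidef.isHermitian

theorem le_Xseq_self (h₀ : (ρ 0).IsHermitian) :
    ∀ {k}, (ρ k).IsHermitian → ρ k ≤ Xseq ρ k
  | 0, _ => le_rfl
  | k + 1, hk =>
    calc ρ (k + 1) = Xseq ρ k + (ρ (k + 1) - Xseq ρ k) := (add_sub_cancel _ _).symm
      _ ≤ Xseq ρ (k + 1) :=
        add_le_add_right (le_matPosPart (hk.sub (isHermitian_Xseq h₀ k))) _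

theorem le_Xseq (h₀ : (ρ 0).IsHermitian) {j k : ℕ} (hj : (ρ j).IsHermitian) (hjk : j ≤ k) :
    ρ j ≤ Xseq ρ k :=
  (le_Xseq_self h₀ hj).trans (monotone_Xseq hjk)

end Xseq

theorem sum_re_trace_mul_le_trace_Xseq {n M : ℕ} (hM : 0 < M)
    {ρ P : ℕ → Matrix (Fin n) (Fin n) ℂ} (hρ : ∀ m < M, (ρ m).IsHermitian)
    (hP : ∀ m < M, (P m).PosSemidef) (hPsum : ∑ m ∈ Finset.range M, P m = 1) :
    ∑ m ∈ Finset.range M, ((ρ m * P m).trace).re ≤ (Xseq ρ (M - 1)).trace.re := by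
  have hρX : ∀ m ∈ Finset.range M, ρ m ≤ Xseq ρ (M - 1) := fun m hm => by
    rw [Finset.mem_range] at hm
    exact le_Xseq (hρ 0 hM) (hρ m hm) (by omega)
  rw [← Complex.re_sum]
  exact Complex.re_le_re <|
    sum_trace_mul_le_trace (fun m hm => hP m (Finset.mem_range.mp hm)) hPsum hρX

theorem stmt_2_general {n M : ℕ} (hM : 0 < M) (ρ : ℕ → Matrix (Fin n) (Fin n) ℂ)
    (hρ : ∀ m < M, (ρ m).PosSemidef) :
    (∀ Pm : ℕ → Matrix (Fin n) (Fin n) ℂ,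
        (∀ m < M, (Pm m).PosSemidef) → (∑ m ∈ Finset.range M, Pm m = 1) →
        ∑ m ∈ Finset.range M, ((ρ m * Pm m).trace).re ≤ (Xseq ρ (M - 1)).trace.re) ∧
    (∀ PCopt : ℝ,
      IsGreatest {x : ℝ | ∃ Pm : ℕ → Matrix (Fin n) (Fin n) ℂ,
          (∀ m < M, (Pm m).PosSemidef) ∧ (∑ m ∈ Finset.range M, Pm m = 1) ∧
          x = ∑ m ∈ Finset.range M, ((ρ m * Pm m).trace).re} PCopt →
      PCopt ≤ (Xseq ρ (M - 1)).trace.re) := by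
  have hρ' : ∀ m < M, (ρ m).IsHermitian := fun m hm => (hρ m hm).isHermitian
  refine ⟨fun _ => sum_re_trace_mul_le_trace_Xseq hM hρ', fun PCopt hopt => ?_⟩
  obtain ⟨Pm, hP, hPsum, rfl⟩ := hopt.1
  exact sum_re_trace_mul_le_trace_Xseq hM hρ' hP hPsum

/-- For every quantum state set and every `M`-outcome POVM, the success
probability is at most `P_C^up = Tr X_{M-1}`; consequently `P_C^up ≥ P_C^opt`. -/
theorem stmt_2 {n M : ℕ} (hM : 0 < M) (ρ : ℕ → Matrix (Fin n) (Fin n) ℂ)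
    (hρ : ∀ m < M, (ρ m).PosSemidef)
    (hρpos : ∀ m < M, 0 < (ρ m).trace.re)
    (hρsum : ∑ m ∈ Finset.range M, (ρ m).trace.re = 1) :
    (∀ Pm : ℕ → Matrix (Fin n) (Fin n) ℂ,
        (∀ m < M, (Pm m).PosSemidef) → (∑ m ∈ Finset.range M, Pm m = 1) →
        ∑ m ∈ Finset.range M, ((ρ m * Pm m).trace).re ≤ (Xseq ρ (M - 1)).trace.re) ∧
    (∀ PCopt : ℝ,
      IsGreatest {x : ℝ | ∃ Pm : ℕ → Matrix (Fin n) (Fin n) ℂ,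
          (∀ m < M, (Pm m).PosSemidef) ∧ (∑ m ∈ Finset.range M, Pm m = 1) ∧
          x = ∑ m ∈ Finset.range M, ((ρ m * Pm m).trace).re} PCopt →
      PCopt ≤ (Xseq ρ (M - 1)).trace.re) :=
  stmt_2_general hM ρ hρ
end

section
/- For a quantum state set ρ_0,…,ρ_{M-1}, let P_C^up(k) denote the value Tr X_{M-1} of the recursion X_0 = ρ_0, X_{m+1} = X_m + (ρ_{m+1} − X_m)_+ applied to the state set obtained by permuting ρ_0 and ρ_k, and let P_C^Qiu(k) = Tr ρ_k + Σ_{m≠k} Tr((ρ_m − ρ_k)_+). Then min_{k∈{0,…,M-1}} P_C^up(k) ≤ min_{k∈{0,…,M-1}} P_C^Qiu(k); in particular, for every quantum state set, Tr ρ_0 + Σ_{m=0}^{M-2} Tr((ρ_{m+1} − X_m)_+) ≤ Tr ρ_0 + Σ_{m=0}^{M-2} Tr((ρ_{m+1} − ρ_0)_+). -/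
open Matrix
open scoped ComplexOrder

/-!
The map `A ↦ Tr A₊` is monotone on Hermitian matrices: if `A ≤ B` and `P` is the projection
onto the positive eigenspace of `A`, then `0 ≤ P ≤ 1` and `B ≤ B₊` give
`Tr A₊ = Tr (P A) ≤ Tr (P B) ≤ Tr (P B₊) ≤ Tr B₊`.
Every `X_m` dominates `ρ₀`, so `ρ_{m+1} − X_m ≤ ρ_{m+1} − ρ₀`, and each increment of the telescoping
sum `Tr X_{M-1} = Tr ρ₀ + Σ_m Tr (ρ_{m+1} − X_m)₊` is at most `Tr (ρ_{m+1} − ρ₀)₊`.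
For the state set with `ρ₀` and `ρ_k` swapped this is `P_C^up(k) ≤ P_C^Qiu(k)`, for every `k`.
-/

namespace Matrix

open Unitary

lemma PosSemidef.re_trace_mul_nonneg {ι : Type*} [Fintype ι] [DecidableEq ι] {P Q : Matrix ι ι ℂ}
    (hP : P.PosSemidef) (hQ : Q.PosSemidef) : 0 ≤ (P * Q).trace.re := by
  obtain ⟨B, rfl⟩ : ∃ B : Matrix ι ι ℂ, P = Bᴴ * B := by
    open scoped MatrixOrder in
    exact CStarAlgebra.nonneg_iff_eq_star_mul_self.mp hP.nonneg
  rw [← trace_mul_cycle]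
  exact (Complex.nonneg_iff.mp (hQ.mul_mul_conjTranspose_same B).trace_nonneg).1

lemma trace_conjStarAlgAut {ι : Type*} [Fintype ι] [DecidableEq ι]
    (u : unitary (Matrix ι ι ℂ)) (X : Matrix ι ι ℂ) :
    (conjStarAlgAut ℂ _ u X).trace = X.trace := by
  rw [conjStarAlgAut_apply, trace_mul_cycle, coe_star_mul_self, one_mul]

lemma posSemidef_conjStarAlgAut_diagonal {ι : Type*} [Fintype ι] [DecidableEq ι]
    (u : unitary (Matrix ι ι ℂ)) {d : ι → ℂ} (hd : ∀ i, 0 ≤ d i) :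
    (conjStarAlgAut ℂ _ u (diagonal d)).PosSemidef := by
  rw [conjStarAlgAut_apply, star_eq_conjTranspose]
  exact (PosSemidef.diagonal hd).mul_mul_conjTranspose_same _

end Matrix

section PositivePart

open Matrix Unitary

variable {n : ℕ} {A : Matrix (Fin n) (Fin n) ℂ}

lemma matPosPart_eq_conjStarAlgAut (hA : A.IsHermitian) :
    matPosPart A = conjStarAlgAut ℂ _ hA.eigenvectorUnitary
      (diagonal fun i => if 0 < hA.eigenvalues i then (hA.eigenvalues i : ℂ) else 0) := by
  rw [matPosPart, dif_pos hA, conjStarAlgAut_apply]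

lemma matProjPos_eq_conjStarAlgAut (hA : A.IsHermitian) :
    matProjPos A = conjStarAlgAut ℂ _ hA.eigenvectorUnitary
      (diagonal fun i => if 0 < hA.eigenvalues i then 1 else 0) := by
  rw [matProjPos, dif_pos hA, conjStarAlgAut_apply]

lemma matPosPart_posSemidef (A : Matrix (Fin n) (Fin n) ℂ) : (matPosPart A).PosSemidef := by
  by_cases hA : A.IsHermitian
  · rw [matPosPart_eq_conjStarAlgAut hA]
    refine posSemidef_conjStarAlgAut_diagonal _ fun i => ?_
    split_ifs with h
    · exact_mod_cast h.le
    · exact le_rfl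
  · simpa [matPosPart, hA] using PosSemidef.zero

lemma matProjPos_posSemidef (A : Matrix (Fin n) (Fin n) ℂ) : (matProjPos A).PosSemidef := by
  by_cases hA : A.IsHermitian
  · rw [matProjPos_eq_conjStarAlgAut hA]
    exact posSemidef_conjStarAlgAut_diagonal _ fun i => by split_ifs <;> norm_num
  · simpa [matProjPos, hA] using PosSemidef.zero

lemma one_sub_matProjPos_posSemidef (hA : A.IsHermitian) : (1 - matProjPos A).PosSemidef := by
  rw [matProjPos_eq_conjStarAlgAut hA, ← map_one (conjStarAlgAut ℂ _ _), ← map_sub,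
    ← diagonal_one, diagonal_sub]
  exact posSemidef_conjStarAlgAut_diagonal _ fun i => by split_ifs <;> norm_num

lemma matPosPart_sub_posSemidef (hA : A.IsHermitian) : (matPosPart A - A).PosSemidef := by
  nth_rw 2 [hA.spectral_theorem]
  rw [matPosPart_eq_conjStarAlgAut hA, ← map_sub, diagonal_sub]
  refine posSemidef_conjStarAlgAut_diagonal _ fun i => ?_
  simp only [Function.comp_apply]
  split_ifs with h
  · simp
  · exact sub_nonneg.mpr (RCLike.ofReal_nonpos.mpr (not_lt.mp h))

lemma trace_matProjPos_mul (hA : A.IsHermitian) :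
    (matProjPos A * A).trace = (matPosPart A).trace := by
  nth_rw 2 [hA.spectral_theorem]
  rw [matProjPos_eq_conjStarAlgAut hA, matPosPart_eq_conjStarAlgAut hA, ← map_mul,
    trace_conjStarAlgAut, trace_conjStarAlgAut, diagonal_mul_diagonal, trace_diagonal,
    trace_diagonal]
  refine Finset.sum_congr rfl fun i _ => ?_
  split_ifs <;> simp

end PositivePart

section TracePositivePart

open Matrix

variable {n : ℕ}

lemma re_trace_mul_le_re_trace_matPosPart {P B : Matrix (Fin n) (Fin n) ℂ}
    (hP : P.PosSemidef) (hP₁ : (1 - P).PosSemidef) (hB : B.IsHermitian) :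
    (P * B).trace.re ≤ (matPosPart B).trace.re := by
  have h₁ := hP.re_trace_mul_nonneg (matPosPart_sub_posSemidef hB)
  have h₂ := hP₁.re_trace_mul_nonneg (matPosPart_posSemidef B)
  simp only [Matrix.mul_sub, Matrix.sub_mul, Matrix.one_mul, trace_sub, Complex.sub_re] at h₁ h₂
  linarith

lemma re_trace_matPosPart_mono {A B : Matrix (Fin n) (Fin n) ℂ}
    (hA : A.IsHermitian) (hB : B.IsHermitian) (hAB : (B - A).PosSemidef) :
    (matPosPart A).trace.re ≤ (matPosPart B).trace.re := by
  have hPA : (matProjPos A * A).trace.re ≤ (matProjPos A * B).trace.re := by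
    have := (matProjPos_posSemidef A).re_trace_mul_nonneg hAB
    rwa [Matrix.mul_sub, trace_sub, Complex.sub_re, sub_nonneg] at this
  calc (matPosPart A).trace.re = (matProjPos A * A).trace.re := by rw [trace_matProjPos_mul hA]
    _ ≤ (matProjPos A * B).trace.re := hPA
    _ ≤ (matPosPart B).trace.re :=
      re_trace_mul_le_re_trace_matPosPart (matProjPos_posSemidef A)
        (one_sub_matProjPos_posSemidef hA) hB

end TracePositivePart

section Recursion

open Matrix

variable {n : ℕ} (ρ : ℕ → Matrix (Fin n) (Fin n) ℂ)

lemma Xseq_isHermitian (h₀ : (ρ 0).IsHermitian) : ∀ m, (Xseq ρ m).IsHermitian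
  | 0 => h₀
  | m + 1 => (Xseq_isHermitian h₀ m).add (matPosPart_posSemidef _).isHermitian

lemma Xseq_sub_posSemidef : ∀ m, (Xseq ρ m - ρ 0).PosSemidef
  | 0 => by simpa [Xseq] using PosSemidef.zero
  | m + 1 => by
    rw [Xseq, add_sub_right_comm]
    exact (Xseq_sub_posSemidef m).add (matPosPart_posSemidef _)

lemma re_trace_Xseq : ∀ N, (Xseq ρ N).trace.re =
    (ρ 0).trace.re + ∑ m ∈ Finset.range N, (matPosPart (ρ (m + 1) - Xseq ρ m)).trace.re
  | 0 => by simp [Xseq]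
  | N + 1 => by
    rw [Finset.sum_range_succ, ← add_assoc, ← re_trace_Xseq N, Xseq, trace_add, Complex.add_re]

lemma sum_re_trace_matPosPart_sub_Xseq_le {M : ℕ} (hρ : ∀ m < M, (ρ m).IsHermitian) :
    ∑ m ∈ Finset.range (M - 1), (matPosPart (ρ (m + 1) - Xseq ρ m)).trace.re ≤
      ∑ m ∈ Finset.range (M - 1), (matPosPart (ρ (m + 1) - ρ 0)).trace.re := by
  refine Finset.sum_le_sum fun m hm => ?_
  have hm : m + 1 < M := by rw [Finset.mem_range] at hm; omega
  have h₀ := hρ 0 (by omega)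
  refine re_trace_matPosPart_mono ((hρ _ hm).sub (Xseq_isHermitian ρ h₀ m)) ((hρ _ hm).sub h₀) ?_
  rw [sub_sub_sub_cancel_left]
  exact Xseq_sub_posSemidef ρ m

end Recursion

lemma Finset.sum_range_pred_swap_zero {β : Type*} [AddCommMonoid β] (f : ℕ → β) {M k : ℕ}
    (hk : k < M) :
    ∑ m ∈ range (M - 1), f (Equiv.swap 0 k (m + 1)) = ∑ m ∈ (range M).erase k, f m := by
  have hshift : ∑ m ∈ range (M - 1), f (Equiv.swap 0 k (m + 1)) =
      ∑ m ∈ (range M).erase 0, f (Equiv.swap 0 k m) := by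
    refine sum_nbij' (· + 1) (· - 1) ?_ ?_ ?_ ?_ fun _ _ => rfl
    all_goals
      intro m hm
      simp only [mem_range, mem_erase] at hm ⊢
      omega
  rw [hshift]
  refine sum_equiv (Equiv.swap 0 k) (fun m => ?_) fun _ _ => rfl
  simp only [mem_erase, mem_range, Equiv.swap_apply_def]
  split_ifs <;> omega

lemma re_trace_Xseq_swap_le {n M k : ℕ} (ρ : ℕ → Matrix (Fin n) (Fin n) ℂ)
    (hρ : ∀ m < M, (ρ m).IsHermitian) (hk : k < M) :
    (Xseq (fun m => ρ (Equiv.swap 0 k m)) (M - 1)).trace.re ≤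
      (ρ k).trace.re + ∑ m ∈ (Finset.range M).erase k, (matPosPart (ρ m - ρ k)).trace.re := by
  set ρ' := fun m => ρ (Equiv.swap 0 k m)
  have hρ' : ∀ m < M, (ρ' m).IsHermitian := fun m hm => hρ _ <| by
    rw [Equiv.swap_apply_def]; split_ifs <;> omega
  calc (Xseq ρ' (M - 1)).trace.re
      = (ρ' 0).trace.re + ∑ m ∈ Finset.range (M - 1),
          (matPosPart (ρ' (m + 1) - Xseq ρ' m)).trace.re := re_trace_Xseq ρ' _
    _ ≤ (ρ' 0).trace.re + ∑ m ∈ Finset.range (M - 1), (matPosPart (ρ' (m + 1) - ρ' 0)).trace.re :=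
        add_le_add_right (sum_re_trace_matPosPart_sub_Xseq_le ρ' hρ') _
    _ = _ := by
        simp only [ρ', Equiv.swap_apply_left]
        rw [Finset.sum_range_pred_swap_zero (fun m => (matPosPart (ρ m - ρ k)).trace.re) hk]

theorem stmt_4_general {n M : ℕ} (hM : 0 < M) (ρ : ℕ → Matrix (Fin n) (Fin n) ℂ)
    (hρ : ∀ m < M, (ρ m).PosSemidef) :
    (Finset.range M).inf' (Finset.nonempty_range_iff.mpr hM.ne')
        (fun k => (Xseq (fun m => ρ (Equiv.swap 0 k m)) (M - 1)).trace.re) ≤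
      (Finset.range M).inf' (Finset.nonempty_range_iff.mpr hM.ne')
        (fun k => (ρ k).trace.re +
          ∑ m ∈ (Finset.range M).erase k, (matPosPart (ρ m - ρ k)).trace.re) ∧
    (ρ 0).trace.re + ∑ m ∈ Finset.range (M - 1), (matPosPart (ρ (m + 1) - Xseq ρ m)).trace.re ≤
      (ρ 0).trace.re + ∑ m ∈ Finset.range (M - 1), (matPosPart (ρ (m + 1) - ρ 0)).trace.re := by
  have hH : ∀ m < M, (ρ m).IsHermitian := fun m hm => (hρ m hm).isHermitian
  refine ⟨Finset.le_inf' _ _ fun k hk => (Finset.inf'_le _ hk).trans ?_,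
    add_le_add_right (sum_re_trace_matPosPart_sub_Xseq_le ρ hH) _⟩
  exact re_trace_Xseq_swap_le ρ hH (Finset.mem_range.mp hk)

/-- `min_k P_C^up(k) ≤ min_k P_C^Qiu(k)`, where `P_C^up(k)` is `Tr X_{M-1}`
for the state set with `ρ₀` and `ρ_k` permuted and
`P_C^Qiu(k) = Tr ρ_k + Σ_{m≠k} Tr((ρ_m − ρ_k)₊)`; in particular
`Tr ρ₀ + Σ_m Tr((ρ_{m+1} − X_m)₊) ≤ Tr ρ₀ + Σ_m Tr((ρ_{m+1} − ρ₀)₊)`. -/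
theorem stmt_4 {n M : ℕ} (hM : 0 < M) (ρ : ℕ → Matrix (Fin n) (Fin n) ℂ)
    (hρ : ∀ m < M, (ρ m).PosSemidef)
    (hρpos : ∀ m < M, 0 < (ρ m).trace.re)
    (hρsum : ∑ m ∈ Finset.range M, (ρ m).trace.re = 1) :
    (Finset.range M).inf' (Finset.nonempty_range_iff.mpr hM.ne')
        (fun k => (Xseq (fun m => ρ (Equiv.swap 0 k m)) (M - 1)).trace.re) ≤
      (Finset.range M).inf' (Finset.nonempty_range_iff.mpr hM.ne')
        (fun k => (ρ k).trace.re +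
          ∑ m ∈ (Finset.range M).erase k, (matPosPart (ρ m - ρ k)).trace.re) ∧
    (ρ 0).trace.re + ∑ m ∈ Finset.range (M - 1), (matPosPart (ρ (m + 1) - Xseq ρ m)).trace.re ≤
      (ρ 0).trace.re + ∑ m ∈ Finset.range (M - 1), (matPosPart (ρ (m + 1) - ρ 0)).trace.re :=
  stmt_4_general hM ρ hρ
end

section
/- Let E_1,…,E_{M-1} be operators on a finite-dimensional complex Hilbert space with 0 ≤ E_k ≤ 1 for all k. Define A_m = E_{m+1}^{1/2} E_{m+2}^{1/2} ⋯ E_{M-1}^{1/2} for 0 ≤ m < M−1 and A_{M-1} = 1, and set Π_0 = |A_0|² and Π_m = |A_m|² − |A_{m-1}|² for 1 ≤ m ≤ M−1, where |A|² = A†A. Then {Π_m}_{m=0}^{M-1} is a POVM: each Π_m is positive semidefinite (indeed Π_m = A_m†(1 − E_m)A_m for 1 ≤ m ≤ M−1) and Σ_{m=0}^{M-1} Π_m = 1. -/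
open Matrix
open scoped ComplexOrder

open scoped Classical in
/-- Positive semidefinite square root (junk value `0` on non-PSD input). -/
noncomputable def matSqrt {n : ℕ} (A : Matrix (Fin n) (Fin n) ℂ) : Matrix (Fin n) (Fin n) ℂ :=
  if hA : A.PosSemidef then
    (hA.1.eigenvectorUnitary : Matrix (Fin n) (Fin n) ℂ) *
      Matrix.diagonal (fun i => ((Real.sqrt (hA.1.eigenvalues i) : ℝ) : ℂ)) *
      star (hA.1.eigenvectorUnitary : Matrix (Fin n) (Fin n) ℂ)
  else 0

/-- `A_m = E_{m+1}^{1/2} E_{m+2}^{1/2} ⋯ E_{M-1}^{1/2}` (in particular `A_{M-1} = 1`). -/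
noncomputable def Aseq {n : ℕ} (M : ℕ) (E : ℕ → Matrix (Fin n) (Fin n) ℂ) (m : ℕ) :
    Matrix (Fin n) (Fin n) ℂ :=
  ((List.range (M - 1 - m)).map (fun j => matSqrt (E (m + 1 + j)))).prod

/-! Since `A_{m-1} = E_m^{1/2} A_m` with `E_m^{1/2}` self-adjoint and squaring to `E_m`,
`A_m†A_m − A_{m-1}†A_{m-1} = A_m†(1 − E_m)A_m`, which is PSD because `1 − E_m` is.
The sum telescopes to `A_{M-1}†A_{M-1} = 1`. -/

theorem conjTranspose_matSqrt {n : ℕ} (A : Matrix (Fin n) (Fin n) ℂ) :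
    (matSqrt A)ᴴ = matSqrt A := by
  unfold matSqrt
  split_ifs
  · simp only [conjTranspose_mul, star_eq_conjTranspose, conjTranspose_conjTranspose,
      diagonal_conjTranspose, Matrix.mul_assoc]
    congr 2
    ext i j
    simp [diagonal_apply]
  · exact conjTranspose_zero

theorem matSqrt_mul_self {n : ℕ} {A : Matrix (Fin n) (Fin n) ℂ} (hA : A.PosSemidef) :
    matSqrt A * matSqrt A = A := by
  have hsqrt : matSqrt A = Unitary.conjStarAlgAut ℂ _ hA.1.eigenvectorUnitary
      (diagonal fun i => ((Real.sqrt (hA.1.eigenvalues i) : ℝ) : ℂ)) := by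
    rw [Unitary.conjStarAlgAut_apply, matSqrt, dif_pos hA]
  conv_rhs => rw [hA.1.spectral_theorem]
  rw [hsqrt, ← map_mul, diagonal_mul_diagonal]
  congr 2
  funext i
  rw [Function.comp_apply, ← Complex.ofReal_mul, Real.mul_self_sqrt (hA.eigenvalues_nonneg i)]
  rfl

theorem star_mul_self_sub_star_mul_self_mul {R : Type*} [Ring R] [StarRing R] {s e : R}
    (hs : IsSelfAdjoint s) (hse : s * s = e) (b : R) :
    star b * b - star (s * b) * (s * b) = star b * (1 - e) * b := by
  rw [star_mul, hs.star_eq, ← hse]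
  noncomm_ring

theorem add_sum_Icc_sub_pred {G : Type*} [AddCommGroup G] (f : ℕ → G) (N : ℕ) :
    f 0 + ∑ m ∈ Finset.Icc 1 N, (f m - f (m - 1)) = f N := by
  induction N with
  | zero => simp
  | succ N ih =>
    rw [Finset.sum_Icc_succ_top (by omega), ← add_assoc, ih, Nat.add_sub_cancel]
    abel

theorem Aseq_sub_one {n M m : ℕ} (E : ℕ → Matrix (Fin n) (Fin n) ℂ) (hm : 1 ≤ m)
    (hmM : m ≤ M - 1) : Aseq M E (m - 1) = matSqrt (E m) * Aseq M E m := by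
  rw [Aseq, show M - 1 - (m - 1) = M - 1 - m + 1 by omega, List.range_succ_eq_map,
    List.map_cons, List.prod_cons, List.map_map, Aseq]
  congr 2
  · congr 1
    omega
  · apply List.map_congr_left
    intro j _
    simp only [Function.comp_apply]
    congr 2
    omega

theorem Aseq_sub_one_self {n M : ℕ} (E : ℕ → Matrix (Fin n) (Fin n) ℂ) :
    Aseq M E (M - 1) = 1 := by
  simp [Aseq]

theorem conjTranspose_mul_self_Aseq_sub {n M m : ℕ} (E : ℕ → Matrix (Fin n) (Fin n) ℂ)
    (hm : 1 ≤ m) (hmM : m ≤ M - 1) (hE : (E m).PosSemidef) :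
    (Aseq M E m)ᴴ * Aseq M E m - (Aseq M E (m - 1))ᴴ * Aseq M E (m - 1) =
      (Aseq M E m)ᴴ * (1 - E m) * Aseq M E m := by
  simpa only [star_eq_conjTranspose, Aseq_sub_one E hm hmM] using
    star_mul_self_sub_star_mul_self_mul (conjTranspose_matSqrt (E m)) (matSqrt_mul_self hE)
      (Aseq M E m)

theorem stmt_7_general {n M : ℕ} (E : ℕ → Matrix (Fin n) (Fin n) ℂ)
    (hE : ∀ k, 1 ≤ k → k ≤ M - 1 →
      (E k).PosSemidef ∧ ((1 : Matrix (Fin n) (Fin n) ℂ) - E k).PosSemidef) :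
    (∀ m, 1 ≤ m → m ≤ M - 1 →
        (Aseq M E m)ᴴ * Aseq M E m - (Aseq M E (m - 1))ᴴ * Aseq M E (m - 1) =
          (Aseq M E m)ᴴ * (1 - E m) * Aseq M E m) ∧
    ((Aseq M E 0)ᴴ * Aseq M E 0).PosSemidef ∧
    (∀ m, 1 ≤ m → m ≤ M - 1 →
        ((Aseq M E m)ᴴ * Aseq M E m - (Aseq M E (m - 1))ᴴ * Aseq M E (m - 1)).PosSemidef) ∧
    (Aseq M E 0)ᴴ * Aseq M E 0 + ∑ m ∈ Finset.Icc 1 (M - 1),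
        ((Aseq M E m)ᴴ * Aseq M E m - (Aseq M E (m - 1))ᴴ * Aseq M E (m - 1)) = 1 := by
  have hPi := fun m hm hmM ↦ conjTranspose_mul_self_Aseq_sub E hm hmM (hE m hm hmM).1
  refine ⟨hPi, posSemidef_conjTranspose_mul_self _, fun m hm hmM ↦ ?_, ?_⟩
  · rw [hPi m hm hmM]
    exact (hE m hm hmM).2.conjTranspose_mul_mul_same _
  · rw [add_sum_Icc_sub_pred (fun m ↦ (Aseq M E m)ᴴ * Aseq M E m), Aseq_sub_one_self]
    simp

/-- Given operators `E_1, …, E_{M-1}` with `0 ≤ E_k ≤ 1`, the operators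
`Π₀ = |A₀|²`, `Π_m = |A_m|² − |A_{m-1}|²` (with `|A|² = A†A`) form a POVM:
`Π_m = A_m†(1 − E_m)A_m` for `1 ≤ m ≤ M−1`, each `Π_m` is PSD, and they sum to `1`. -/
theorem stmt_7 {n M : ℕ} (hM : 0 < M) (E : ℕ → Matrix (Fin n) (Fin n) ℂ)
    (hE : ∀ k, 1 ≤ k → k ≤ M - 1 →
      (E k).PosSemidef ∧ ((1 : Matrix (Fin n) (Fin n) ℂ) - E k).PosSemidef) :
    (∀ m, 1 ≤ m → m ≤ M - 1 →
        (Aseq M E m)ᴴ * Aseq M E m - (Aseq M E (m - 1))ᴴ * Aseq M E (m - 1) =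
          (Aseq M E m)ᴴ * (1 - E m) * Aseq M E m) ∧
    ((Aseq M E 0)ᴴ * Aseq M E 0).PosSemidef ∧
    (∀ m, 1 ≤ m → m ≤ M - 1 →
        ((Aseq M E m)ᴴ * Aseq M E m - (Aseq M E (m - 1))ᴴ * Aseq M E (m - 1)).PosSemidef) ∧
    (Aseq M E 0)ᴴ * Aseq M E 0 + ∑ m ∈ Finset.Icc 1 (M - 1),
        ((Aseq M E m)ᴴ * Aseq M E m - (Aseq M E (m - 1))ᴴ * Aseq M E (m - 1)) = 1 :=
  stmt_7_general E hE
end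

section
/- For any Hermitian operators A and B on a finite-dimensional complex Hilbert space, Tr(A_+) + Tr(B_+) ≥ Tr((A + B)_+). -/
/-!
Let `P` be the spectral projection of `A + B` onto its positive eigenvalues. Then
`Tr((A + B)₊) = Tr((A + B) P) = Tr(A P) + Tr(B P)`, and `Tr(X P) ≤ Tr(X₊)` for every Hermitian `X`
and every `0 ≤ P ≤ 1`: writing `X = X₊ - X₋`, both `Tr(X₋ P)` and `Tr(X₊ (1 - P))` are traces of
products of positive semidefinite matrices, hence nonnegative.
-/

open Matrix
open scoped ComplexOrder

open scoped MatrixOrder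

namespace Matrix

section RCLike

variable {n 𝕜 : Type*} [Fintype n] [DecidableEq n] [RCLike 𝕜]

theorem trace_mul_nonneg {X Y : Matrix n n 𝕜} (hX : 0 ≤ X) (hY : 0 ≤ Y) :
    0 ≤ (X * Y).trace := by
  obtain ⟨S, rfl⟩ := CStarAlgebra.nonneg_iff_eq_star_mul_self.mp hX
  rw [mul_assoc, trace_mul_comm]
  exact ((nonneg_iff_posSemidef.mp hY).mul_mul_conjTranspose_same S).trace_nonneg

theorem trace_mul_le_trace_posPart {A P : Matrix n n 𝕜} (hA : IsSelfAdjoint A)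
    (hP₀ : 0 ≤ P) (hP₁ : P ≤ 1) : (A * P).trace ≤ (A⁺).trace :=
  calc (A * P).trace = (A⁺ * P).trace - (A⁻ * P).trace := by
        rw [← trace_sub, ← sub_mul, CFC.posPart_sub_negPart A hA]
    _ ≤ (A⁺ * P).trace := sub_le_self _ (trace_mul_nonneg (CFC.negPart_nonneg A) hP₀)
    _ ≤ (A⁺ * P).trace + (A⁺ * (1 - P)).trace :=
        le_add_of_nonneg_right (trace_mul_nonneg (CFC.posPart_nonneg A) (sub_nonneg.mpr hP₁))
    _ = (A⁺).trace := by rw [← trace_add, ← mul_add, add_sub_cancel, mul_one]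

end RCLike

variable {n : ℕ} {A : Matrix (Fin n) (Fin n) ℂ}

theorem matPosPart_eq_cfc (hA : A.IsHermitian) :
    matPosPart A = cfc (fun x : ℝ ↦ if 0 < x then x else 0) A := by
  rw [hA.cfc_eq, IsHermitian.cfc, Unitary.conjStarAlgAut_apply, matPosPart, dif_pos hA]
  congr; funext i; split_ifs <;> simp [*]

theorem matProjPos_eq_cfc (hA : A.IsHermitian) :
    matProjPos A = cfc (fun x : ℝ ↦ if 0 < x then 1 else 0) A := by
  rw [hA.cfc_eq, IsHermitian.cfc, Unitary.conjStarAlgAut_apply, matProjPos, dif_pos hA]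
  congr; funext i; split_ifs <;> simp [*]

theorem matPosPart_eq_posPart (hA : A.IsHermitian) : matPosPart A = A⁺ := by
  rw [matPosPart_eq_cfc hA, CFC.posPart_def, cfcₙ_eq_cfc]
  refine cfc_congr fun x _ ↦ ?_
  split_ifs with h
  · exact (posPart_eq_self.mpr h.le).symm
  · exact (posPart_eq_zero.mpr (not_lt.mp h)).symm

theorem mul_matProjPos (hA : A.IsHermitian) : A * matProjPos A = matPosPart A := by
  have hcont (f : ℝ → ℝ) : ContinuousOn f (spectrum ℝ A) := A.finite_real_spectrum.continuousOn f
  rw [matProjPos_eq_cfc hA, matPosPart_eq_cfc hA]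
  nth_rw 1 [← cfc_id ℝ A hA.isSelfAdjoint]
  rw [← cfc_mul _ _ A (hcont _) (hcont _)]
  exact cfc_congr fun x _ ↦ by simp

theorem matProjPos_nonneg (hA : A.IsHermitian) : 0 ≤ matProjPos A := by
  rw [matProjPos_eq_cfc hA]
  exact cfc_nonneg fun x _ ↦ by split_ifs <;> norm_num

theorem matProjPos_le_one (hA : A.IsHermitian) : matProjPos A ≤ 1 := by
  rw [matProjPos_eq_cfc hA]
  exact cfc_le_one _ _ fun x _ ↦ by split_ifs <;> norm_num

end Matrix

/-- For Hermitian `A`, `B`, `Tr(A₊) + Tr(B₊) ≥ Tr((A + B)₊)`. -/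
theorem stmt_16 {n : ℕ} (A B : Matrix (Fin n) (Fin n) ℂ)
    (hA : A.IsHermitian) (hB : B.IsHermitian) :
    (matPosPart (A + B)).trace.re ≤ (matPosPart A).trace.re + (matPosPart B).trace.re := by
  have hAB : (A + B).IsHermitian := hA.add hB
  have hP₀ := matProjPos_nonneg hAB
  have hP₁ := matProjPos_le_one hAB
  have h : (matPosPart (A + B)).trace ≤ (matPosPart A).trace + (matPosPart B).trace := by
    rw [← mul_matProjPos hAB, add_mul, trace_add, matPosPart_eq_posPart hA,
      matPosPart_eq_posPart hB]
    exact add_le_add (trace_mul_le_trace_posPart hA.isSelfAdjoint hP₀ hP₁)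
      (trace_mul_le_trace_posPart hB.isSelfAdjoint hP₀ hP₁)
  simpa using Complex.re_le_re h
end
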